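/- arXiv:1312.2166 — 5 statements merged into one kernel-verified Lean document; each statement's English description precedes it below -/
import Mathlib

section
/- Let M be a positive integer and let α₀, α₁, …, α_M be a log-concave sequence of nonnegative real numbers. Then the function g(x) = Σ_{i=0}^{M} αᵢ · (M choose i) · (1-x)^i · x^{M-i} is log-concave in x on the interval (0, 1). -/
/-!
Write `B_N a x = ∑ aᵢ C(N,i) (1-x)^i x^(N-i)` and `Sa = a(· + 1)`. The de Casteljau recursion
`B_{N+1} a = (1-x) B_N (Sa) + x B_N a` is a two-term convolution in the shift index, so it
preserves log-concavity of `k ↦ B_N (Sᵏa) x`; it also gives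
`(B_{N+1} a)' = (N+1)(B_N a - B_N (Sa))`.

For `g = B_M α` let `A, B, C` be `B_{M-2} (Sᵏα) x` for `k = 0, 1, 2`. Then
`g = (1-x)²C + 2x(1-x)B + x²A`, `g' = M((1-x)(B-C) + x(A-B))`, `g'' = M(M-1)(A-2B+C)` and
`(g'/M)² = g''g/(M(M-1)) + B² - AC`. Log-concavity of the shifts gives `AC ≤ B²`, hence
`g''g ≤ g'²`, so `log g` is concave wherever `g > 0`.
-/

open Real Set

/-- A nonnegative function is log-concave on a set if
`f (λx + (1-λ)y) ≥ f x ^ λ * f y ^ (1-λ)` for all `x, y` in the set and `0 < λ < 1`. -/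
def IsLogConcaveOn (S : Set ℝ) (f : ℝ → ℝ) : Prop :=
  ∀ x ∈ S, ∀ y ∈ S, ∀ l : ℝ, 0 < l → l < 1 →
    f x ^ l * f y ^ (1 - l) ≤ f (l * x + (1 - l) * y)

noncomputable def bernsteinSum (a : ℕ → ℝ) (N : ℕ) (x : ℝ) : ℝ :=
  ∑ i ∈ Finset.range (N + 1), a i * (N.choose i : ℝ) * (1 - x) ^ i * x ^ (N - i)

namespace bernsteinSum

variable (a : ℕ → ℝ) (N : ℕ) (x : ℝ)

theorem zero_left : bernsteinSum a 0 x = a 0 := by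
  simp [bernsteinSum]

theorem succ :
    bernsteinSum a (N + 1) x =
      (1 - x) * bernsteinSum (fun i => a (i + 1)) N x + x * bernsteinSum a N x := by
  have hlow : ∑ i ∈ Finset.range (N + 1),
        a (i + 1) * (N.choose (i + 1) : ℝ) * (1 - x) ^ (i + 1) * x ^ (N - i)
        + a 0 * x ^ (N + 1) = x * bernsteinSum a N x := by
    rw [bernsteinSum, Finset.mul_sum, Finset.sum_range_succ, Finset.sum_range_succ' _ N]
    simp only [Nat.choose_succ_self, Nat.cast_zero, mul_zero, zero_mul, add_zero]
    congr 1
    · refine Finset.sum_congr rfl fun i hi => ?_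
      rw [show N - i = N - (i + 1) + 1 by simp at hi; omega]
      ring
    · simp only [Nat.choose_zero_right, Nat.cast_one, mul_one, pow_zero, tsub_zero]
      ring
  rw [bernsteinSum, Finset.sum_range_succ', ← hlow, bernsteinSum, Finset.mul_sum]
  simp only [Nat.choose_succ_succ', Nat.cast_add, Nat.add_sub_add_right, Nat.choose_zero_right,
    Nat.cast_one, pow_zero, Nat.sub_zero, mul_one]
  rw [← add_assoc, ← Finset.sum_add_distrib]
  congr 1
  refine Finset.sum_congr rfl fun i _ => ?_
  ring

theorem hasDerivAt_succ :
    HasDerivAt (bernsteinSum a (N + 1))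
      ((N + 1) * (bernsteinSum a N x - bernsteinSum (fun i => a (i + 1)) N x)) x := by
  have hu : HasDerivAt (fun y : ℝ => 1 - y) (-1) x := by
    simpa using (hasDerivAt_id' x).const_sub 1
  induction N generalizing a with
  | zero =>
    have h : bernsteinSum a 1 = fun y => (1 - y) * a 1 + y * a 0 := by
      funext y; simp [succ, zero_left]
    rw [h]
    refine ((hu.mul_const (a 1)).add ((hasDerivAt_id' x).mul_const (a 0))).congr_deriv ?_
    simp only [neg_mul, one_mul, CharP.cast_eq_zero, zero_add, zero_left]
    ring
  | succ N ih =>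
    have h : bernsteinSum a (N + 2) = fun y =>
        (1 - y) * bernsteinSum (fun i => a (i + 1)) (N + 1) y + y * bernsteinSum a (N + 1) y :=
      funext (succ a (N + 1))
    rw [h]
    refine ((hu.mul (ih fun i => a (i + 1))).add ((hasDerivAt_id' x).mul (ih a))).congr_deriv ?_
    rw [succ a N, succ _ N]
    push_cast
    ring

-- For `N = 0` the truncated `N - 1` is harmless: the factor `N` vanishes.
theorem hasDerivAt :
    HasDerivAt (bernsteinSum a N)
      (N * (bernsteinSum a (N - 1) x - bernsteinSum (fun i => a (i + 1)) (N - 1) x)) x := by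
  cases N with
  | zero =>
    rw [show bernsteinSum a 0 = fun _ => a 0 from funext (zero_left a)]
    simpa using hasDerivAt_const x (a 0)
  | succ N => simpa using hasDerivAt_succ a N x

variable {a N x}

theorem pos (ha : ∀ i ≤ N, 0 ≤ a i) {j : ℕ} (hjN : j ≤ N) (haj : 0 < a j)
    (hx : x ∈ Ioo 0 1) :
    0 < bernsteinSum a N x := by
  have hx₀ := hx.1
  have hx₁ := sub_pos.2 hx.2
  refine Finset.sum_pos' (fun i hi => ?_) ⟨j, by simpa [Nat.lt_succ_iff] using hjN, ?_⟩
  · have := ha i (by simpa [Nat.lt_succ_iff] using hi)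
    positivity
  · have := Nat.choose_pos hjN
    positivity

theorem eq_zero (ha : ∀ i ≤ N, a i = 0) : bernsteinSum a N = 0 :=
  funext fun x => Finset.sum_eq_zero fun i hi => by
    simp [ha i (by simpa [Nat.lt_succ_iff] using hi)]

end bernsteinSum

def LogConcaveUpTo (n : ℕ) (a : ℕ → ℝ) : Prop :=
  ∀ i j, i ≤ j → j + 2 ≤ n → a i * a (j + 2) ≤ a (i + 1) * a (j + 1)

namespace LogConcaveUpTo

variable {n : ℕ} {a : ℕ → ℝ}

theorem mul_le_of_le_succ (h : LogConcaveUpTo n a) {i j : ℕ} (hij : i ≤ j + 1)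
    (hjn : j + 2 ≤ n) :
    a i * a (j + 2) ≤ a (i + 1) * a (j + 1) := by
  obtain hij | rfl := Nat.le_or_eq_of_le_succ hij
  · exact h i j hij hjn
  · rw [mul_comm]

theorem pascal (h : LogConcaveUpTo (n + 1) a) {u v : ℝ} (hu : 0 ≤ u) (hv : 0 ≤ v) :
    LogConcaveUpTo n fun k => u * a (k + 1) + v * a k := by
  intro i j hij hjn
  have h₁ := h (i + 1) (j + 1) (by omega) (by omega)
  have h₂ := h i j hij (by omega)
  have h₃ := (h i (j + 1) (by omega) (by omega)).trans
    (h.mul_le_of_le_succ (i := i + 1) (j := j) (by omega) (by omega))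
  show (u * a (i + 1) + v * a i) * (u * a (j + 3) + v * a (j + 2))
    ≤ (u * a (i + 2) + v * a (i + 1)) * (u * a (j + 2) + v * a (j + 1))
  linear_combination (u * u) * h₁ + (v * v) * h₂ + (u * v) * h₃

end LogConcaveUpTo

theorem LogConcaveUpTo.bernsteinSum_shift {a : ℕ → ℝ} {N n : ℕ}
    (ha : LogConcaveUpTo (N + n) a) {x : ℝ} (hx : x ∈ Icc 0 1) :
    LogConcaveUpTo n fun k => bernsteinSum (fun i => a (i + k)) N x := by
  induction N generalizing n with
  | zero => simpa [bernsteinSum.zero_left] using ha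
  | succ N ih =>
    have hpascal := (ih (n := n + 1) (by rwa [← add_assoc, add_right_comm])).pascal
      (sub_nonneg.2 hx.2) hx.1
    convert hpascal using 3 with k
    rw [bernsteinSum.succ]
    simp only [add_assoc, add_comm 1]

theorem second_difference_mul_le_sq {A B C u v c d : ℝ} (huv : u + v = 1) (hB : A * C ≤ B ^ 2)
    (hc : 0 ≤ c) (hcd : c ≤ d) :
    c * ((A - 2 * B + C) * (u ^ 2 * C + 2 * u * v * B + v ^ 2 * A))
      ≤ d * (u * (B - C) + v * (A - B)) ^ 2 := by
  have key : (u * (B - C) + v * (A - B)) ^ 2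
      = (A - 2 * B + C) * (u ^ 2 * C + 2 * u * v * B + v ^ 2 * A)
        + (B ^ 2 - A * C) * (u + v) ^ 2 := by
    ring
  rw [huv] at key
  rcases le_total ((A - 2 * B + C) * (u ^ 2 * C + 2 * u * v * B + v ^ 2 * A)) 0
    with hneg | hnonneg
  · exact (mul_nonpos_of_nonneg_of_nonpos hc hneg).trans (by have := hc.trans hcd; positivity)
  · exact mul_le_mul hcd (by linarith) hnonneg (hc.trans hcd)

theorem bernsteinSum_second_deriv_mul_le_sq {a : ℕ → ℝ} {M : ℕ} (ha : LogConcaveUpTo M a)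
    {x : ℝ} (hx : x ∈ Icc 0 1) :
    M * ((M - 1 : ℕ) * (bernsteinSum a (M - 1 - 1) x
          - bernsteinSum (fun i => a (i + 1)) (M - 1 - 1) x)
        - (M - 1 : ℕ) * (bernsteinSum (fun i => a (i + 1)) (M - 1 - 1) x
          - bernsteinSum (fun i => a (i + 1 + 1)) (M - 1 - 1) x)) * bernsteinSum a M x
      ≤ (M * (bernsteinSum a (M - 1) x - bernsteinSum (fun i => a (i + 1)) (M - 1) x)) ^ 2 := by
  rcases M with _ | _ | m
  · simp
  · simp only [zero_add, Nat.cast_one, tsub_self, CharP.cast_eq_zero, zero_tsub, zero_mul,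
      sub_self, mul_zero, one_mul]
    positivity
  have hB := ha.bernsteinSum_shift (N := m) (n := 2) hx 0 0 le_rfl le_rfl
  simp only [add_zero, zero_add, ← sq] at hB
  simp only [Nat.add_sub_cancel]
  rw [bernsteinSum.succ a (m + 1), bernsteinSum.succ a m, bernsteinSum.succ _ m]
  have key := second_difference_mul_le_sq (sub_add_cancel 1 x) hB
    (c := (m + 1 + 1) * (m + 1)) (d := (m + 1 + 1) ^ 2) (by positivity) (by nlinarith)
  push_cast
  linear_combination key

theorem IsLogConcaveOn.of_concaveOn_log {S : Set ℝ} {f : ℝ → ℝ} (hf : ∀ x ∈ S, 0 < f x)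
    (h : ConcaveOn ℝ S fun x => log (f x)) : IsLogConcaveOn S f := by
  intro x hx y hy l hl₀ hl₁
  have hz : l * x + (1 - l) * y ∈ S :=
    h.1 hx hy hl₀.le (sub_nonneg.2 hl₁.le) (add_sub_cancel l 1)
  rw [rpow_def_of_pos (hf x hx), rpow_def_of_pos (hf y hy), ← exp_add, ← exp_log (hf _ hz)]
  gcongr
  simpa [mul_comm] using h.2 hx hy hl₀.le (sub_nonneg.2 hl₁.le) (add_sub_cancel l 1)

theorem IsLogConcaveOn.of_hasDerivAt {S : Set ℝ} (hS : Convex ℝ S) (hSo : IsOpen S)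
    {f f' f'' : ℝ → ℝ} (hf : ∀ x ∈ S, HasDerivAt f (f' x) x)
    (hf' : ∀ x ∈ S, HasDerivAt f' (f'' x) x)
    (hpos : ∀ x ∈ S, 0 < f x) (h : ∀ x ∈ S, f'' x * f x ≤ f' x ^ 2) :
    IsLogConcaveOn S f := by
  refine .of_concaveOn_log hpos <| concaveOn_of_hasDerivWithinAt2_nonpos hS
    (f' := fun x => f' x / f x) (f'' := fun x => (f'' x * f x - f' x ^ 2) / f x ^ 2)
    (fun x hx => ((hf x hx).continuousAt.log (hpos x hx).ne').continuousWithinAt) ?_ ?_ ?_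
    <;> rw [hSo.interior_eq] <;> intro x hx
  · exact ((hf x hx).log (hpos x hx).ne').hasDerivWithinAt
  · exact ((hf' x hx).fun_div (hf x hx) (hpos x hx).ne' |>.congr_deriv (by ring)).hasDerivWithinAt
  · exact div_nonpos_of_nonpos_of_nonneg (sub_nonpos.2 (h x hx)) (sq_nonneg _)

theorem isLogConcaveOn_zero (S : Set ℝ) : IsLogConcaveOn S 0 := fun _ _ _ _ _ hl _ => by
  simp [zero_rpow hl.ne']

theorem log_concave_mixture_beta_discrete_general
    (M : ℕ) (α : ℕ → ℝ)
    (hα_nonneg : ∀ i ≤ M, 0 ≤ α i)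
    (hα_logconcave : ∀ i j : ℕ, 1 ≤ i → i ≤ j → j + 1 ≤ M →
      α (i - 1) * α (j + 1) ≤ α i * α j) :
    IsLogConcaveOn (Set.Ioo (0 : ℝ) 1)
      (fun x : ℝ => ∑ i ∈ Finset.range (M + 1),
        α i * (M.choose i : ℝ) * (1 - x) ^ i * x ^ (M - i)) := by
  change IsLogConcaveOn _ (bernsteinSum α M)
  have hlc : LogConcaveUpTo M α := fun i j hij hjM => by
    simpa using hα_logconcave (i + 1) (j + 1) (by omega) (by omega) (by omega)
  by_cases hzero : ∀ i ≤ M, α i = 0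
  · rw [bernsteinSum.eq_zero hzero]
    exact isLogConcaveOn_zero _
  push Not at hzero
  obtain ⟨i, hiM, hi⟩ := hzero
  exact .of_hasDerivAt (convex_Ioo 0 1) isOpen_Ioo
    (fun x _ => bernsteinSum.hasDerivAt α M x)
    (fun x _ => ((bernsteinSum.hasDerivAt α (M - 1) x).sub
      (bernsteinSum.hasDerivAt _ (M - 1) x)).const_mul _)
    (fun x hx => bernsteinSum.pos hα_nonneg hiM ((hα_nonneg i hiM).lt_of_ne hi.symm) hx)
    (fun x hx => bernsteinSum_second_deriv_mul_le_sq hlc (Ioo_subset_Icc_self hx))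

theorem log_concave_mixture_beta_discrete
    (M : ℕ) (hM : 0 < M) (α : ℕ → ℝ)
    (hα_nonneg : ∀ i ≤ M, 0 ≤ α i)
    (hα_logconcave : ∀ i j : ℕ, 1 ≤ i → i ≤ j → j + 1 ≤ M →
      α (i - 1) * α (j + 1) ≤ α i * α j) :
    IsLogConcaveOn (Set.Ioo (0 : ℝ) 1)
      (fun x : ℝ => ∑ i ∈ Finset.range (M + 1),
        α i * (M.choose i : ℝ) * (1 - x) ^ i * x ^ (M - i)) :=
  log_concave_mixture_beta_discrete_general M α hα_nonneg hα_logconcave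
end

section
/- Let M > 1, q > 0 and n > -2 be real numbers, and let A = {s ∈ ℝ : |s - (n - s)| ≤ q, 0 ≤ s ≤ M, and 0 ≤ n - s ≤ M}. Then ∫_A C(M-1, s)·C(M-1, n-s) ds ≥ ∫_A C(M, s)·C(M-2, n-s) ds. -/
/-!
Put `F(s) = C(M-1,s)·C(M-1,n-s) - C(M,s)·C(M-2,n-s)`. In the manner of Gosper's algorithm,
`F(s) = κ·(U(s+1) - U(s))` for every real `s`, with `κ = Γ(M)²/(2(M-1)) > 0`,
`U(s) = 2(s+M-n-1)·P(s)` and `P(s) = 1/(Γ(s)Γ(n-s+1)Γ(M-s+1)Γ(M-n+s))`, which is invariant under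
`s ↦ n+1-s`. The set `A` is an interval `[n-d, d]` centred at `n/2`, so `∫_A F` telescopes to
`κ·∫_d^{d+1} (U(x) - U(n+1-x)) dx = κ·∫_d^{d+1} 2(2x-n-1)·P(x) dx`. This integrand is odd about
`(n+1)/2` and nonnegative to its right, and `[d, d+1]` extends at least as far to the right of
`(n+1)/2` as to its left, so the integral is nonnegative.
-/

open Real MeasureTheory Set

/-- Generalized binomial coefficient `C(M,s) = Γ(M+1)/(Γ(s+1)·Γ(M-s+1))`. -/
noncomputable def genBinom (M s : ℝ) : ℝ :=
  Real.Gamma (M + 1) / (Real.Gamma (s + 1) * Real.Gamma (M - s + 1))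

lemma Real.continuous_inv_Gamma : Continuous fun x : ℝ => (Gamma x)⁻¹ := by
  have h : (fun x : ℝ => (Gamma x)⁻¹) = fun x : ℝ => ((Complex.Gamma x)⁻¹).re := by
    funext x
    rw [Complex.Gamma_ofReal, ← Complex.ofReal_inv, Complex.ofReal_re]
  rw [h]
  exact Complex.continuous_re.comp
    (Complex.differentiable_one_div_Gamma.continuous.comp Complex.continuous_ofReal)

lemma continuous_genBinom (M : ℝ) : Continuous (genBinom M) := by
  unfold genBinom
  simp only [div_eq_mul_inv, mul_inv]
  exact continuous_const.mul ((continuous_inv_Gamma.comp (by fun_prop)).mul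
    (continuous_inv_Gamma.comp (by fun_prop)))

section IntervalIntegral

variable {f g : ℝ → ℝ}

lemma integral_comp_add_one_sub (hf : Continuous f) (a b : ℝ) :
    ∫ x in a..b, (f (x + 1) - f x) = (∫ x in b..b + 1, f x) - ∫ x in a..a + 1, f x := by
  have hint : ∀ u v : ℝ, IntervalIntegrable f volume u v := hf.intervalIntegrable
  have hshift : Continuous fun x => f (x + 1) := by fun_prop
  rw [intervalIntegral.integral_sub (hshift.intervalIntegrable a b) (hint a b),
    intervalIntegral.integral_comp_add_right f 1]
  have h₁ := intervalIntegral.integral_add_adjacent_intervals (hint a (a + 1))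
    (hint (a + 1) (b + 1))
  have h₂ := intervalIntegral.integral_add_adjacent_intervals (hint a b) (hint b (b + 1))
  linarith

lemma integral_comp_add_one_sub_symm (hf : Continuous f) (c b : ℝ) :
    ∫ x in (c - b)..b, (f (x + 1) - f x) = ∫ x in b..b + 1, (f x - f (c + 1 - x)) := by
  have hreflect : ∫ x in (c - b)..(c - b) + 1, f x = ∫ x in b..b + 1, f (c + 1 - x) := by
    rw [intervalIntegral.integral_comp_sub_left f (c + 1)]
    ring_nf
  have hreflect_cont : Continuous fun x => f (c + 1 - x) := by fun_prop
  rw [integral_comp_add_one_sub hf, hreflect, intervalIntegral.integral_sub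
    (hf.intervalIntegrable _ _) (hreflect_cont.intervalIntegrable _ _)]

lemma integral_eq_zero_of_antisymm {c : ℝ} (hg : ∀ x, g (c - x) = -g x) (a : ℝ) :
    ∫ x in a..(c - a), g x = 0 := by
  have h := intervalIntegral.integral_comp_sub_left g c (a := a) (b := c - a)
  simp only [hg, intervalIntegral.integral_neg, sub_sub_cancel] at h
  linarith

lemma integral_nonneg_of_antisymm {c : ℝ} (hg : Continuous g) (hanti : ∀ x, g (c - x) = -g x)
    {a b : ℝ} (hab : a ≤ b) (hcab : c - a ≤ b) (hpos : ∀ x ∈ Icc (c / 2) b, 0 ≤ g x) :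
    0 ≤ ∫ x in a..b, g x := by
  rcases le_or_gt (c / 2) a with hca | hac
  · exact intervalIntegral.integral_nonneg hab fun x hx => hpos x ⟨hca.trans hx.1, hx.2⟩
  · have hint : ∀ u v : ℝ, IntervalIntegrable g volume u v := hg.intervalIntegrable
    rw [← intervalIntegral.integral_add_adjacent_intervals (hint a (c - a)) (hint (c - a) b),
      integral_eq_zero_of_antisymm hanti, zero_add]
    exact intervalIntegral.integral_nonneg hcab fun x hx => hpos x ⟨by linarith [hx.1], hx.2⟩

end IntervalIntegral

/-- No hypothesis on `x` is needed: at the poles both sides vanish, `Gamma` being `0` there. -/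
lemma Real.inv_Gamma_eq_mul_inv_Gamma_add_one (x : ℝ) :
    (Gamma x)⁻¹ = x * (Gamma (x + 1))⁻¹ := by
  rcases eq_or_ne x 0 with rfl | hx
  · simp [Real.Gamma_zero]
  · rw [Real.Gamma_add_one hx, mul_inv, ← mul_assoc, mul_inv_cancel₀ hx, one_mul]

noncomputable def gammaWeight (M n s : ℝ) : ℝ :=
  (Gamma s)⁻¹ * (Gamma (n - s + 1))⁻¹ * (Gamma (M - s + 1))⁻¹ * (Gamma (M - n + s))⁻¹

noncomputable def gosperTerm (M n s : ℝ) : ℝ :=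
  2 * (s + M - n - 1) * gammaWeight M n s

lemma gammaWeight_reflect (M n s : ℝ) : gammaWeight M n (n + 1 - s) = gammaWeight M n s := by
  unfold gammaWeight
  rw [show n - (n + 1 - s) + 1 = s by ring, show M - (n + 1 - s) + 1 = M - n + s by ring,
    show M - n + (n + 1 - s) = M - s + 1 by ring, show n + 1 - s = n - s + 1 by ring]
  ring

lemma gosperTerm_sub_reflect (M n s : ℝ) :
    gosperTerm M n s - gosperTerm M n (n + 1 - s) = 2 * (2 * s - n - 1) * gammaWeight M n s := by
  unfold gosperTerm
  rw [gammaWeight_reflect]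
  ring

lemma gammaWeight_nonneg {M n s : ℝ} (hs : 0 ≤ s) (hsn : s ≤ n + 1) (hsM : s ≤ M + 1)
    (hnM : n ≤ M + s) : 0 ≤ gammaWeight M n s := by
  have h : ∀ x : ℝ, 0 ≤ x → 0 ≤ (Gamma x)⁻¹ := fun x hx =>
    inv_nonneg.mpr (Gamma_nonneg_of_nonneg hx)
  unfold gammaWeight
  have := h s hs
  have := h (n - s + 1) (by linarith)
  have := h (M - s + 1) (by linarith)
  have := h (M - n + s) (by linarith)
  positivity

lemma continuous_gammaWeight (M n : ℝ) : Continuous (gammaWeight M n) := by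
  unfold gammaWeight
  have h := Real.continuous_inv_Gamma
  exact ((h.mul (h.comp (by fun_prop))).mul (h.comp (by fun_prop))).mul (h.comp (by fun_prop))

lemma continuous_gosperTerm (M n : ℝ) : Continuous (gosperTerm M n) :=
  (by fun_prop : Continuous fun s : ℝ => 2 * (s + M - n - 1)).mul (continuous_gammaWeight M n)

lemma genBinom_sub_eq_gosperTerm_sub {M : ℝ} (hM₀ : M ≠ 0) (hM₁ : M ≠ 1) (n s : ℝ) :
    genBinom (M - 1) s * genBinom (M - 1) (n - s) - genBinom M s * genBinom (M - 2) (n - s)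
      = Gamma M ^ 2 / (2 * (M - 1)) * (gosperTerm M n (s + 1) - gosperTerm M n s) := by
  have hr : ∀ x y : ℝ, y = x + 1 → (Gamma x)⁻¹ = x * (Gamma y)⁻¹ := by
    rintro x y rfl; exact Real.inv_Gamma_eq_mul_inv_Gamma_add_one x
  have hM1 : M - 1 ≠ 0 := sub_ne_zero.mpr hM₁
  have hΓM : Gamma (M - 1) = Gamma M / (M - 1) := by
    rw [eq_div_iff hM1, mul_comm, ← Real.Gamma_add_one hM1, sub_add_cancel]
  unfold genBinom gosperTerm gammaWeight
  simp only [div_eq_mul_inv, mul_inv]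
  rw [show M - 1 + 1 = M by ring, show M - 2 + 1 = M - 1 by ring, hΓM,
    Real.Gamma_add_one hM₀, hr s (s + 1) (by ring),
    hr (M - 1 - s + 1) (M - s + 1) (by ring), hr (M - (s + 1) + 1) (M - s + 1) (by ring),
    hr (n - (s + 1) + 1) (n - s + 1) (by ring),
    hr (M - 2 - (n - s) + 1) (M - n + s) (by ring),
    hr (M - 1 - (n - s) + 1) (M - n + s + 1) (by ring),
    hr (M - n + s) (M - n + s + 1) (by ring), show M - n + (s + 1) = M - n + s + 1 by ring]
  field_simp
  ring

lemma integral_genBinom_sub_nonneg {M n d : ℝ} (hM : 1 < M) (hnd : n / 2 ≤ d) (hdn : d ≤ n)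
    (hdM : d ≤ M) :
    0 ≤ ∫ s in (n - d)..d,
      (genBinom (M - 1) s * genBinom (M - 1) (n - s) -
        genBinom M s * genBinom (M - 2) (n - s)) := by
  simp_rw [genBinom_sub_eq_gosperTerm_sub (by linarith : M ≠ 0) hM.ne' n]
  rw [intervalIntegral.integral_const_mul,
    integral_comp_add_one_sub_symm (continuous_gosperTerm M n)]
  refine mul_nonneg (div_nonneg (sq_nonneg _) (by linarith)) ?_
  simp_rw [gosperTerm_sub_reflect]
  have hcont := continuous_gammaWeight M n
  refine integral_nonneg_of_antisymm (c := n + 1) (by fun_prop) (fun x => ?_) (by linarith)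
    (by linarith) fun x hx => mul_nonneg (by linarith [hx.1]) (gammaWeight_nonneg ?_ ?_ ?_ ?_)
  · rw [gammaWeight_reflect]
    ring
  all_goals linarith [hx.1, hx.2]

lemma setOf_abs_sub_le_eq_Icc (M q n : ℝ) :
    {s : ℝ | |s - (n - s)| ≤ q ∧ 0 ≤ s ∧ s ≤ M ∧ 0 ≤ n - s ∧ n - s ≤ M} =
      Icc (n - min M (min n ((n + q) / 2))) (min M (min n ((n + q) / 2))) := by
  ext s
  simp only [mem_ofPred_eq, mem_Icc, abs_le, le_min_iff, sub_le_comm (a := n)]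
  constructor
  · rintro ⟨⟨h₁, h₂⟩, h₃, h₄, h₅, h₆⟩
    refine ⟨⟨?_, ?_, ?_⟩, ?_, ?_, ?_⟩ <;> linarith
  · rintro ⟨⟨h₁, h₂, h₃⟩, h₄, h₅, h₆⟩
    refine ⟨⟨?_, ?_⟩, ?_, ?_, ?_, ?_⟩ <;> linarith

theorem genBinom_integral_ineq_A_general
    (M q n : ℝ) (hM : 1 < M)
    (A : Set ℝ)
    (hA : A = {s : ℝ | |s - (n - s)| ≤ q ∧ 0 ≤ s ∧ s ≤ M ∧ 0 ≤ n - s ∧ n - s ≤ M}) :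
    (∫ s in A, genBinom M s * genBinom (M - 2) (n - s)) ≤
      ∫ s in A, genBinom (M - 1) s * genBinom (M - 1) (n - s) := by
  set d := min M (min n ((n + q) / 2))
  rw [hA, setOf_abs_sub_le_eq_Icc]
  rcases lt_or_ge d (n / 2) with hdn | hnd
  · rw [Icc_eq_empty (by linarith)]
    simp
  have hF : Continuous fun s => genBinom (M - 1) s * genBinom (M - 1) (n - s) := by
    have := continuous_genBinom (M - 1); fun_prop
  have hG : Continuous fun s => genBinom M s * genBinom (M - 2) (n - s) := by
    have := continuous_genBinom M; have := continuous_genBinom (M - 2); fun_prop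
  have hcd : n - d ≤ d := by linarith
  have key := integral_genBinom_sub_nonneg hM hnd ((min_le_right _ _).trans (min_le_left _ _))
    (min_le_left _ _)
  rw [intervalIntegral.integral_sub (hF.intervalIntegrable _ _) (hG.intervalIntegrable _ _),
    intervalIntegral.integral_of_le hcd, intervalIntegral.integral_of_le hcd] at key
  rw [integral_Icc_eq_integral_Ioc, integral_Icc_eq_integral_Ioc]
  linarith

theorem genBinom_integral_ineq_A
    (M q n : ℝ) (hM : 1 < M) (hq : 0 < q) (hn : -2 < n)
    (A : Set ℝ)
    (hA : A = {s : ℝ | |s - (n - s)| ≤ q ∧ 0 ≤ s ∧ s ≤ M ∧ 0 ≤ n - s ∧ n - s ≤ M}) :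
    (∫ s in A, genBinom M s * genBinom (M - 2) (n - s)) ≤
      ∫ s in A, genBinom (M - 1) s * genBinom (M - 1) (n - s) :=
  genBinom_integral_ineq_A_general M q n hM A hA
end

section
/- Let M be a positive integer, n a nonnegative integer, and k an integer with k ≤ (n+1)/2. Then Σ_{i=k}^{n-k} (M-1 choose i)·(M-1 choose n-i) ≥ Σ_{i=k}^{n-k} (M choose i)·(M-2 choose n-i), where by convention (M choose i) = 0 whenever i < 0 or i > M. -/
/-!
Write `C(m, j)` for `binomZ m j` and `M = p + 2`. Pascal's rule applied to `C(p + 2, i)` and to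
`C(p + 1, n - i)` turns each term `C(p + 1, i) C(p + 1, n - i) - C(p + 2, i) C(p, n - i)` of the
difference of the two sums into `f (i + 1) - f i` with `f i = C(p + 1, i - 1) C(p, n - i)`.
Over the symmetric range `k ≤ i ≤ n - k` the sum telescopes to
`C(p + 1, n - k) C(p, k - 1) - C(p + 1, k - 1) C(p, n - k)`, which is nonnegative because
`C(p, j) / C(p + 1, j) = (p + 1 - j) / (p + 1)` decreases in `j`.
-/

/-- Binomial coefficient with integer arguments, zero by convention when the
lower index is negative or exceeds the upper index. -/
def binomZ (n k : ℤ) : ℕ :=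
  if 0 ≤ k ∧ k ≤ n then n.toNat.choose k.toNat else 0

open Finset

theorem Int.sum_Icc_sub {G : Type*} [AddCommGroup G] (f : ℤ → G) {a b : ℤ}
    (hab : a - 1 ≤ b) :
    ∑ i ∈ Icc a b, (f (i + 1) - f i) = f (b + 1) - f a := by
  induction b, hab using Int.leInduction with
  | base => simp
  | succ b hab ih =>
    rw [← insert_Icc_right_eq_Icc_add_one (by omega), sum_insert (by simp), ih]
    abel

theorem Nat.add_one_choose_mul_choose_le (p : ℕ) {a b : ℕ} (hab : a ≤ b) :
    (p + 1).choose a * p.choose b ≤ (p + 1).choose b * p.choose a := by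
  refine Nat.le_of_mul_le_mul_right ?_ p.succ_pos
  calc (p + 1).choose a * p.choose b * (p + 1)
      = (p + 1).choose a * (p + 1).choose b * (p + 1 - b) := by
        rw [mul_assoc, choose_mul_succ_eq, mul_assoc]
    _ ≤ (p + 1).choose a * (p + 1).choose b * (p + 1 - a) := Nat.mul_le_mul_left _ (by omega)
    _ = (p + 1).choose b * p.choose a * (p + 1) := by
        rw [mul_assoc _ (p.choose a), choose_mul_succ_eq]; ring

theorem binomZ_natCast (m j : ℕ) : binomZ m j = m.choose j := by
  unfold binomZ
  split_ifs with h
  · simp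
  · exact (Nat.choose_eq_zero_of_lt (by omega)).symm

theorem binomZ_of_neg {n k : ℤ} (hk : k < 0) : binomZ n k = 0 := by
  unfold binomZ; rw [if_neg]; omega

theorem binomZ_of_lt {n k : ℤ} (h : n < k) : binomZ n k = 0 := by
  unfold binomZ; rw [if_neg]; omega

theorem binomZ_of_neg_left {n : ℤ} (hn : n < 0) (k : ℤ) : binomZ n k = 0 := by
  unfold binomZ; rw [if_neg]; omega

theorem binomZ_add_one {n : ℤ} (hn : 0 ≤ n) (k : ℤ) :
    binomZ (n + 1) k = binomZ n (k - 1) + binomZ n k := by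
  rcases lt_or_ge k 0 with hk | hk
  · simp [binomZ_of_neg hk, binomZ_of_neg (show k - 1 < 0 by omega)]
  lift n to ℕ using hn
  lift k to ℕ using hk
  cases k with
  | zero =>
    simp [binomZ]; omega
  | succ j =>
    rw [show ((j + 1 : ℕ) : ℤ) - 1 = j by push_cast; ring, ← Nat.cast_add_one, binomZ_natCast,
      binomZ_natCast, binomZ_natCast, Nat.choose_succ_succ]

theorem binomZ_add_one_mul_binomZ_le (p : ℤ) {a b : ℤ} (hab : a ≤ b) :
    binomZ (p + 1) a * binomZ p b ≤ binomZ (p + 1) b * binomZ p a := by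
  rcases lt_or_ge a 0 with ha | ha
  · simp [binomZ_of_neg ha]
  rcases lt_or_ge p b with hb | hb
  · simp [binomZ_of_lt hb]
  lift p to ℕ using by omega
  lift a to ℕ using ha
  lift b to ℕ using by omega
  rw [← Nat.cast_add_one, binomZ_natCast, binomZ_natCast, binomZ_natCast, binomZ_natCast]
  exact Nat.add_one_choose_mul_choose_le p (by omega)

theorem binomZ_mul_sub_binomZ_mul {p : ℤ} (hp : 0 ≤ p) (n i : ℤ) :
    (binomZ (p + 1) i * binomZ (p + 1) (n - i) : ℤ) - binomZ (p + 2) i * binomZ p (n - i) =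
      binomZ (p + 1) i * binomZ p (n - i - 1) - binomZ (p + 1) (i - 1) * binomZ p (n - i) := by
  rw [binomZ_add_one hp (n - i), show p + 2 = p + 1 + 1 by ring,
    binomZ_add_one (n := p + 1) (by omega) i]
  push_cast
  ring_nf

theorem sum_binomZ_mul_binomZ_le {p : ℤ} (hp : 0 ≤ p) (n a : ℤ) :
    ∑ i ∈ Icc a (n - a), binomZ (p + 2) i * binomZ p (n - i) ≤
      ∑ i ∈ Icc a (n - a), binomZ (p + 1) i * binomZ (p + 1) (n - i) := by
  rcases lt_or_ge (n - a) a with hempty | hle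
  · simp [Icc_eq_empty_of_lt hempty]
  have hab : a - 1 ≤ n - a := by omega
  rw [← Nat.cast_le (α := ℤ), ← sub_nonneg]
  push_cast
  have telescope :=
    Int.sum_Icc_sub (fun i ↦ (binomZ (p + 1) (i - 1) * binomZ p (n - i) : ℤ)) hab
  simp only [add_sub_cancel_right, sub_add_eq_sub_sub, sub_sub_cancel] at telescope
  rw [← sum_sub_distrib, sum_congr rfl fun i _ ↦ binomZ_mul_sub_binomZ_mul hp n i, telescope,
    sub_nonneg]
  exact_mod_cast binomZ_add_one_mul_binomZ_le p hab

theorem binom_sum_ineq_one_general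
    (M : ℕ) (n : ℕ) (k : ℤ) :
    (∑ i ∈ Finset.Icc k ((n : ℤ) - k), binomZ ((M : ℤ)) i * binomZ ((M : ℤ) - 2) (n - i)) ≤
      ∑ i ∈ Finset.Icc k ((n : ℤ) - k), binomZ ((M : ℤ) - 1) i * binomZ ((M : ℤ) - 1) (n - i) := by
  rcases lt_or_ge M 2 with hM | hM
  · simp [binomZ_of_neg_left (show (M : ℤ) - 2 < 0 by omega)]
  have h := sum_binomZ_mul_binomZ_le (p := (M : ℤ) - 2) (by omega) n k
  rwa [sub_add_cancel, show (M : ℤ) - 2 + 1 = M - 1 by ring] at h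

theorem binom_sum_ineq_one
    (M : ℕ) (hM : 0 < M) (n : ℕ) (k : ℤ) (hk : 2 * k ≤ (n : ℤ) + 1) :
    (∑ i ∈ Finset.Icc k ((n : ℤ) - k), binomZ ((M : ℤ)) i * binomZ ((M : ℤ) - 2) (n - i)) ≤
      ∑ i ∈ Finset.Icc k ((n : ℤ) - k), binomZ ((M : ℤ) - 1) i * binomZ ((M : ℤ) - 1) (n - i) :=
  binom_sum_ineq_one_general M n k
end

section
/- Let M be a positive integer and let α₀, α₁, …, α_M be a log-concave sequence of nonnegative reals. Define g(x) = Σ_{i=0}^{M} αᵢ · (M choose i) · (1-x)^i · x^{M-i}. Then ((M-1)/M) · g'(x)² ≥ g(x) · g''(x) for every x ∈ (0, 1). -/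
/-!
Write `g = ∑ bᵢ Tᵢ` with `bᵢ = αᵢ (M choose i)` and `Tᵢ x = (1 - x)^i x^(M - i)`. Each `Tᵢ`
solves `x (1 - x) Tᵢ' = Wᵢ Tᵢ` with `Wᵢ = (M - i) - M x`; differentiating this once more
expresses `x² (1 - x)² Tᵢ''` through `Wᵢ` as well, and then
`2 x² (1 - x)² (M g g'' - (M - 1) g'²) = ∑ᵢⱼ bᵢ bⱼ Tᵢ Tⱼ w(i, j)` with the constant weight
`w(i, j) = M (i - j)² + 2 i j - M (i + j)`.
Since `Tᵢ Tⱼ` only depends on `i + j`, it suffices to look at one antidiagonal `i + j = k`. There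
the binomially weighted sum of `w` vanishes, `w` grows with `|i - j|`, and by log-concavity
`αᵢ αⱼ` decreases with `|i - j|`; subtracting from `αᵢ αⱼ` the constant at which `w` changes sign
therefore makes every term nonpositive without changing the sum.
-/

open Finset

theorem natCast_mul_pow_sub_one_mul {R : Type*} [Semiring R] (n : ℕ) (y : R) :
    (n : R) * y ^ (n - 1) * y = n * y ^ n := by
  rcases Nat.eq_zero_or_pos n with rfl | hn
  · simp
  · rw [mul_assoc, pow_sub_one_mul hn.ne']

theorem natCast_add_one_mul_choose_succ {R : Type*} [CommRing R] (M n : ℕ) :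
    ((n : R) + 1) * M.choose (n + 1) = ((M : R) - n) * M.choose n := by
  rcases le_or_gt n M with h | h
  · have := congrArg (Nat.cast (R := R)) (Nat.choose_succ_right_eq M n)
    push_cast [h] at this
    linear_combination this
  · simp [Nat.choose_eq_zero_of_lt h, Nat.choose_eq_zero_of_lt (Nat.lt_succ_of_lt h)]

theorem sum_range_add_one_eq_sum_range {A : Type*} [AddCommMonoid A] {N : ℕ} {f : ℕ → A}
    (h₀ : f 0 = 0) (hN : f N = 0) : ∑ i ∈ range N, f (i + 1) = ∑ i ∈ range N, f i := by
  simpa [h₀, hN] using (sum_range_succ' f N).symm.trans (sum_range_succ f N)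

theorem sum_range_sum_range_sub_eq_zero {A : Type*} [AddCommGroup A] {N : ℕ}
    (G : ℕ → ℕ → A) (h₀ : ∀ k, G 0 k = 0 ∧ G k 0 = 0) (hN : ∀ k, G N k = 0 ∧ G k N = 0) :
    ∑ i ∈ range N, ∑ j ∈ range N, (G (i + 1) j - G i (j + 1)) = 0 := by
  have hi :
      ∑ i ∈ range N, ∑ j ∈ range N, G (i + 1) j = ∑ i ∈ range N, ∑ j ∈ range N, G i j :=
    calc _ = ∑ j ∈ range N, ∑ i ∈ range N, G (i + 1) j := sum_comm
      _ = ∑ j ∈ range N, ∑ i ∈ range N, G i j :=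
        sum_congr rfl fun j _ =>
          sum_range_add_one_eq_sum_range (f := fun i => G i j) (h₀ j).1 (hN j).1
      _ = _ := sum_comm
  have hj :
      ∑ i ∈ range N, ∑ j ∈ range N, G i (j + 1) = ∑ i ∈ range N, ∑ j ∈ range N, G i j :=
    sum_congr rfl fun i _ => sum_range_add_one_eq_sum_range (f := G i) (h₀ i).2 (hN i).2
  simp only [sum_sub_distrib, hi, hj, sub_self]

theorem exists_sub_mul_nonpos {ι R : Type*} [CommRing R] [LinearOrder R]
    [IsStrictOrderedRing R] (s : Finset ι) (a h : ι → R)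
    (hah : ∀ p ∈ s, ∀ q ∈ s, 0 < h p → h q ≤ 0 → a p ≤ a q) :
    ∃ c, ∀ p ∈ s, (a p - c) * h p ≤ 0 := by
  by_cases hpos : ∃ p ∈ s, 0 < h p
  · obtain ⟨p, hp, hhp⟩ := hpos
    obtain ⟨p₀, hp₀, hmax⟩ :=
      (s.filter (0 < h ·)).exists_max_image a ⟨p, mem_filter.2 ⟨hp, hhp⟩⟩
    rw [mem_filter] at hp₀
    refine ⟨a p₀, fun q hq => ?_⟩
    rcases lt_or_ge 0 (h q) with hq' | hq'
    · exact mul_nonpos_of_nonpos_of_nonneg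
        (sub_nonpos.2 (hmax q (mem_filter.2 ⟨hq, hq'⟩))) hq'.le
    · exact mul_nonpos_of_nonneg_of_nonpos (sub_nonneg.2 (hah p₀ hp₀.1 q hq hp₀.2 hq')) hq'
  · simp only [not_exists, not_and, not_lt] at hpos
    obtain ⟨c, hc⟩ := (s.image a).bddBelow
    exact ⟨c, fun p hp => mul_nonpos_of_nonneg_of_nonpos
      (sub_nonneg.2 (hc (mem_coe.2 (mem_image_of_mem a hp)))) (hpos p hp)⟩

theorem sq_mul_deriv_deriv_of_mul_deriv_eq {𝕜 : Type*} [NontriviallyNormedField 𝕜]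
    {f P W : 𝕜 → 𝕜} {x P' W' : 𝕜} (hPW : ∀ y, P y * deriv f y = W y * f y)
    (hf : DifferentiableAt 𝕜 f x) (hf' : DifferentiableAt 𝕜 (deriv f) x)
    (hP : HasDerivAt P P' x) (hW : HasDerivAt W W' x) :
    P x ^ 2 * deriv (deriv f) x = (W x ^ 2 - P' * W x + P x * W') * f x := by
  have hL := hP.fun_mul hf'.hasDerivAt
  rw [funext hPW] at hL
  have h := hL.unique (hW.fun_mul hf.hasDerivAt)
  linear_combination P x * h + (W x - P') * hPW x

theorem deriv_sum_const_mul {𝕜 ι : Type*} [NontriviallyNormedField 𝕜] (s : Finset ι)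
    (b : ι → 𝕜) {f : ι → 𝕜 → 𝕜} (hf : ∀ i ∈ s, Differentiable 𝕜 (f i)) :
    deriv (fun y => ∑ i ∈ s, b i * f i y) = fun y => ∑ i ∈ s, b i * deriv (f i) y := by
  funext y
  rw [deriv_fun_sum fun i hi => ((hf i hi) y).const_mul (b i)]
  exact sum_congr rfl fun i hi => deriv_const_mul (b i) (hf i hi y)

namespace StrengthenedLogConcavity

noncomputable def bernsteinMonomial (M i : ℕ) (x : ℝ) : ℝ := (1 - x) ^ i * x ^ (M - i)

noncomputable def pairWeight (M i j : ℕ) : ℝ :=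
  M * ((i : ℝ) - j) ^ 2 + 2 * i * j - M * (i + j)

theorem contDiff_bernsteinMonomial (M i : ℕ) : ContDiff ℝ 2 (bernsteinMonomial M i) := by
  unfold bernsteinMonomial
  fun_prop

theorem bernsteinMonomial_nonneg (M i : ℕ) {x : ℝ} (hx0 : 0 ≤ x) (hx1 : x ≤ 1) :
    0 ≤ bernsteinMonomial M i x :=
  mul_nonneg (pow_nonneg (sub_nonneg.2 hx1) _) (pow_nonneg hx0 _)

theorem bernsteinMonomial_mul_bernsteinMonomial {M i j : ℕ} (hi : i ≤ M) (hj : j ≤ M)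
    (x : ℝ) :
    bernsteinMonomial M i x * bernsteinMonomial M j x =
      (1 - x) ^ (i + j) * x ^ (2 * M - (i + j)) := by
  rw [bernsteinMonomial, bernsteinMonomial, show 2 * M - (i + j) = M - i + (M - j) by omega,
    pow_add, pow_add]
  ring

theorem mul_deriv_bernsteinMonomial {M i : ℕ} (hi : i ≤ M) (x : ℝ) :
    x * (1 - x) * deriv (bernsteinMonomial M i) x =
      ((M - i : ℝ) - M * x) * bernsteinMonomial M i x := by
  have h : HasDerivAt (bernsteinMonomial M i)
      (i * (1 - x) ^ (i - 1) * (-1) * x ^ (M - i) +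
        (1 - x) ^ i * ((M - i : ℕ) * x ^ (M - i - 1))) x :=
    (((hasDerivAt_id' x).const_sub 1).pow i).fun_mul (hasDerivAt_pow (M - i) x)
  have h₁ := natCast_mul_pow_sub_one_mul i (1 - x)
  have h₂ := natCast_mul_pow_sub_one_mul (M - i) x
  rw [h.deriv, bernsteinMonomial]
  rw [Nat.cast_sub hi] at h₂ ⊢
  linear_combination (-x * x ^ (M - i)) * h₁ + ((1 - x) * (1 - x) ^ i) * h₂

theorem sq_mul_deriv_deriv_bernsteinMonomial {M i : ℕ} (hi : i ≤ M) (x : ℝ) :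
    (x * (1 - x)) ^ 2 * deriv (deriv (bernsteinMonomial M i)) x =
      (((M - i : ℝ) - M * x) ^ 2 - (1 - 2 * x) * ((M - i : ℝ) - M * x) -
        M * (x * (1 - x))) * bernsteinMonomial M i x := by
  have hP : HasDerivAt (fun y : ℝ => y * (1 - y)) (1 - 2 * x) x :=
    ((hasDerivAt_id' x).fun_mul ((hasDerivAt_id' x).const_sub 1)).congr_deriv (by ring)
  have hW : HasDerivAt (fun y : ℝ => (M - i : ℝ) - M * y) (-M) x :=
    (((hasDerivAt_id' x).const_mul (M : ℝ)).const_sub ((M : ℝ) - i)).congr_deriv (by ring)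
  have hT := contDiff_bernsteinMonomial M i
  rw [sq_mul_deriv_deriv_of_mul_deriv_eq (mul_deriv_bernsteinMonomial hi)
    (hT.differentiable (by norm_num) x) hT.differentiable_deriv_two.differentiableAt hP hW]
  ring

theorem sq_mul_two_mul_sub_eq_sum_sum_pairWeight (M : ℕ) (b : ℕ → ℝ) (x : ℝ) :
    (x * (1 - x)) ^ 2 * (2 * (M * ((∑ i ∈ range (M + 1), b i * bernsteinMonomial M i x) *
        ∑ i ∈ range (M + 1), b i * deriv (deriv (bernsteinMonomial M i)) x) -
      (M - 1) * (∑ i ∈ range (M + 1), b i * deriv (bernsteinMonomial M i) x) ^ 2)) =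
    ∑ i ∈ range (M + 1), ∑ j ∈ range (M + 1),
      b i * b j * (bernsteinMonomial M i x * bernsteinMonomial M j x) * pairWeight M i j := by
  set G := ∑ i ∈ range (M + 1), b i * bernsteinMonomial M i x
  set G₁ := ∑ i ∈ range (M + 1), b i * deriv (bernsteinMonomial M i) x
  set G₂ := ∑ i ∈ range (M + 1), b i * deriv (deriv (bernsteinMonomial M i)) x
  have h₁ : x * (1 - x) * G₁ =
      ∑ i ∈ range (M + 1), b i * (((M - i : ℝ) - M * x) * bernsteinMonomial M i x) := by
    rw [mul_sum]
    refine sum_congr rfl fun i hi => ?_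
    rw [← mul_deriv_bernsteinMonomial (mem_range_succ_iff.1 hi)]
    ring
  have h₂ : (x * (1 - x)) ^ 2 * G₂ =
      ∑ i ∈ range (M + 1), b i * ((((M - i : ℝ) - M * x) ^ 2 -
        (1 - 2 * x) * ((M - i : ℝ) - M * x) - M * (x * (1 - x))) * bernsteinMonomial M i x) := by
    rw [mul_sum]
    refine sum_congr rfl fun i hi => ?_
    rw [← sq_mul_deriv_deriv_bernsteinMonomial (mem_range_succ_iff.1 hi)]
    ring
  calc _ = M * G * ((x * (1 - x)) ^ 2 * G₂) + M * ((x * (1 - x)) ^ 2 * G₂) * G -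
        2 * (M - 1) * (x * (1 - x) * G₁) * (x * (1 - x) * G₁) := by ring
    _ = _ := by
      rw [h₁, h₂]
      simp only [G, mul_sum, sum_mul, ← sum_add_distrib, ← sum_sub_distrib]
      refine sum_congr rfl fun i _ => sum_congr rfl fun j _ => ?_
      rw [pairWeight]
      ring

theorem sum_sum_mul_choose_mul_choose_pairWeight (M : ℕ) (φ : ℕ → ℝ) :
    ∑ i ∈ range (M + 1), ∑ j ∈ range (M + 1),
      φ (i + j) * (M.choose i * M.choose j * pairWeight M i j) = 0 := by
  let u : ℕ → ℝ := fun n => n * M.choose n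
  have hu : ∀ n : ℕ, u (n + 1) = ((M : ℝ) - n) * M.choose n := fun n => by
    simp only [u]
    push_cast
    exact natCast_add_one_mul_choose_succ M n
  -- `u a * u b * (b - a)` is a discrete antiderivative of the weight along antidiagonals.
  refine (sum_congr rfl fun i _ => sum_congr rfl fun j _ => ?_).trans
    (sum_range_sum_range_sub_eq_zero (N := M + 1)
      (fun a b => φ (a + b - 1) * (u a * u b * ((b : ℝ) - a))) ?_ ?_)
  · simp only [show i + 1 + j - 1 = i + j by omega, show i + (j + 1) - 1 = i + j by omega, hu]
    simp only [u, pairWeight]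
    push_cast
    ring
  · intro k
    simp [u]
  · intro k
    simp [u, Nat.choose_succ_self]

def LogConcaveUpTo (M : ℕ) (α : ℕ → ℝ) : Prop :=
  ∀ i j : ℕ, 1 ≤ i → i ≤ j → j + 1 ≤ M → α (i - 1) * α (j + 1) ≤ α i * α j

namespace LogConcaveUpTo

variable {M : ℕ} {α : ℕ → ℝ}

theorem mul_le_mul_add_sub (hα : LogConcaveUpTo M α) {i j n : ℕ} (hij : i + 2 * n ≤ j)
    (hj : j ≤ M) : α i * α j ≤ α (i + n) * α (j - n) := by
  induction n with
  | zero => simp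
  | succ n ih =>
    have h := hα (i + n + 1) (j - n - 1) (by omega) (by omega) (by omega)
    rw [show i + n + 1 - 1 = i + n by omega, show j - n - 1 + 1 = j - n by omega] at h
    rw [← add_assoc, Nat.sub_add_eq]
    exact (ih (by omega)).trans h

theorem mul_le_mul_of_sq_sub_le (hα : LogConcaveUpTo M α) {i j i' j' : ℕ}
    (hsum : i + j = i' + j') (hi : i ≤ M) (hj : j ≤ M)
    (hd : ((i' : ℝ) - j') ^ 2 ≤ ((i : ℝ) - j) ^ 2) : α i * α j ≤ α i' * α j' := by
  have key : ∀ a b a' b' : ℕ, a + b = a' + b' → a ≤ b → a' ≤ b' → b ≤ M →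
      ((a' : ℝ) - b') ^ 2 ≤ ((a : ℝ) - b) ^ 2 → α a * α b ≤ α a' * α b' := by
    intro a b a' b' hs hab hab' hb hsq
    have hs' : (a : ℝ) + b = a' + b' := by exact_mod_cast hs
    have hab₁ : (a : ℝ) ≤ b := by exact_mod_cast hab
    have hab₁' : (a' : ℝ) ≤ b' := by exact_mod_cast hab'
    have haa' : a ≤ a' := by
      have : (a : ℝ) ≤ a' := by nlinarith
      exact_mod_cast this
    obtain ⟨n, rfl⟩ : ∃ n, a' = a + n := ⟨a' - a, by omega⟩
    obtain rfl : b' = b - n := by omega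
    exact hα.mul_le_mul_add_sub (by omega) hb
  have hd' : ((j' : ℝ) - i') ^ 2 ≤ ((j : ℝ) - i) ^ 2 := by linarith [hd]
  rcases le_total i j with h | h <;> rcases le_total i' j' with h' | h'
  · exact key i j i' j' hsum h h' hj hd
  · rw [mul_comm (α i')]
    exact key i j j' i' (by omega) h h' hj (by linarith)
  · rw [mul_comm (α i)]
    exact key j i i' j' (by omega) h h' hi (by linarith)
  · rw [mul_comm (α i), mul_comm (α i')]
    exact key j i j' i' (by omega) h h' hi hd'

theorem exists_threshold (hα : LogConcaveUpTo M α) (hM : 0 < M) (k : ℕ) :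
    ∃ c : ℝ, ∀ i ≤ M, ∀ j ≤ M, i + j = k → (α i * α j - c) * pairWeight M i j ≤ 0 := by
  set s := (range (M + 1) ×ˢ range (M + 1)).filter fun p : ℕ × ℕ => p.1 + p.2 = k
  have hs : ∀ {i j : ℕ}, (i, j) ∈ s ↔ i ≤ M ∧ j ≤ M ∧ i + j = k := by
    intro i j
    simp only [s, mem_filter, mem_product, mem_range]
    omega
  suffices hsep : ∀ p ∈ s, ∀ q ∈ s, 0 < pairWeight M p.1 p.2 → pairWeight M q.1 q.2 ≤ 0 →
      α p.1 * α p.2 ≤ α q.1 * α q.2 by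
    obtain ⟨c, hc⟩ := exists_sub_mul_nonpos s _ _ hsep
    exact ⟨c, fun i hi j hj hk => hc (i, j) (hs.2 ⟨hi, hj, hk⟩)⟩
  rintro ⟨i, j⟩ hp ⟨i', j'⟩ hq hpos hneg
  rw [hs] at hp hq
  refine hα.mul_le_mul_of_sq_sub_le (by omega) hp.1 hp.2.1 ?_
  have hsum : (i : ℝ) + j = i' + j' := by exact_mod_cast hp.2.2.trans hq.2.2.symm
  have hM₁ : (1 : ℝ) ≤ M := by exact_mod_cast hM
  -- On an antidiagonal, `2 w(i, j) = (2M - 1)(i - j)² + k² - 2Mk`.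
  have hw : 2 * (pairWeight M i j - pairWeight M i' j') =
      (2 * M - 1) * (((i : ℝ) - j) ^ 2 - ((i' : ℝ) - j') ^ 2) := by
    unfold pairWeight
    linear_combination ((i : ℝ) + j + i' + j' - 2 * M) * hsum
  nlinarith

theorem sum_sum_mul_pairWeight_nonpos (hα : LogConcaveUpTo M α) (hM : 0 < M) {x : ℝ}
    (hx0 : 0 ≤ x) (hx1 : x ≤ 1) :
    ∑ i ∈ range (M + 1), ∑ j ∈ range (M + 1), α i * M.choose i * (α j * M.choose j) *
      (bernsteinMonomial M i x * bernsteinMonomial M j x) * pairWeight M i j ≤ 0 := by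
  choose c hc using hα.exists_threshold hM
  have hzero := sum_sum_mul_choose_mul_choose_pairWeight M
    fun k => c k * ((1 - x) ^ k * x ^ (2 * M - k))
  calc _ = ∑ i ∈ range (M + 1), ∑ j ∈ range (M + 1),
        ((α i * α j - c (i + j)) * pairWeight M i j *
          (M.choose i * M.choose j * (bernsteinMonomial M i x * bernsteinMonomial M j x)) +
        c (i + j) * ((1 - x) ^ (i + j) * x ^ (2 * M - (i + j))) *
          (M.choose i * M.choose j * pairWeight M i j)) :=
        sum_congr rfl fun i hi => sum_congr rfl fun j hj => by
          rw [bernsteinMonomial_mul_bernsteinMonomial (mem_range_succ_iff.1 hi)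
            (mem_range_succ_iff.1 hj)]
          ring
    _ = ∑ i ∈ range (M + 1), ∑ j ∈ range (M + 1),
        (α i * α j - c (i + j)) * pairWeight M i j *
          (M.choose i * M.choose j * (bernsteinMonomial M i x * bernsteinMonomial M j x)) := by
        simp only [sum_add_distrib, hzero, add_zero]
    _ ≤ 0 := sum_nonpos fun i hi => sum_nonpos fun j hj =>
        mul_nonpos_of_nonpos_of_nonneg
          (hc _ i (mem_range_succ_iff.1 hi) j (mem_range_succ_iff.1 hj) rfl)
          (mul_nonneg (by positivity) (mul_nonneg (bernsteinMonomial_nonneg M i hx0 hx1)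
            (bernsteinMonomial_nonneg M j hx0 hx1)))

end LogConcaveUpTo

end StrengthenedLogConcavity

open StrengthenedLogConcavity

theorem strengthened_log_concavity_discrete_general
    (M : ℕ) (hM : 0 < M) (α : ℕ → ℝ)
    (hα_logconcave : ∀ i j : ℕ, 1 ≤ i → i ≤ j → j + 1 ≤ M →
      α (i - 1) * α (j + 1) ≤ α i * α j)
    (g : ℝ → ℝ)
    (hg : g = fun x : ℝ => ∑ i ∈ Finset.range (M + 1),
      α i * (M.choose i : ℝ) * (1 - x) ^ i * x ^ (M - i)) :
    ∀ x ∈ Set.Ioo (0 : ℝ) 1,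
      g x * deriv (deriv g) x ≤ ((M : ℝ) - 1) / M * (deriv g x) ^ 2 := by
  rintro x ⟨hx0, hx1⟩
  have hT : ∀ i ∈ range (M + 1), Differentiable ℝ (bernsteinMonomial M i) :=
    fun i _ => (contDiff_bernsteinMonomial M i).differentiable (by norm_num)
  have hT' : ∀ i ∈ range (M + 1), Differentiable ℝ (deriv (bernsteinMonomial M i)) :=
    fun i _ => (contDiff_bernsteinMonomial M i).differentiable_deriv_two
  have hgT : g = fun y => ∑ i ∈ range (M + 1), α i * M.choose i * bernsteinMonomial M i y := by
    rw [hg]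
    funext y
    exact sum_congr rfl fun i _ => by rw [bernsteinMonomial]; ring
  have hform :=
    (sq_mul_two_mul_sub_eq_sum_sum_pairWeight M (fun i => α i * M.choose i) x).trans_le
      (LogConcaveUpTo.sum_sum_mul_pairWeight_nonpos hα_logconcave hM hx0.le hx1.le)
  rw [hgT, deriv_sum_const_mul _ _ hT, deriv_sum_const_mul _ _ hT']
  have hP : 0 < (x * (1 - x)) ^ 2 := pow_pos (mul_pos hx0 (sub_pos.2 hx1)) 2
  have hM' : (0 : ℝ) < M := by exact_mod_cast hM
  rw [div_mul_eq_mul_div, le_div_iff₀ hM']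
  linarith [nonpos_of_mul_nonpos_right hform hP]

theorem strengthened_log_concavity_discrete
    (M : ℕ) (hM : 0 < M) (α : ℕ → ℝ)
    (hα_nonneg : ∀ i ≤ M, 0 ≤ α i)
    (hα_logconcave : ∀ i j : ℕ, 1 ≤ i → i ≤ j → j + 1 ≤ M →
      α (i - 1) * α (j + 1) ≤ α i * α j)
    (g : ℝ → ℝ)
    (hg : g = fun x : ℝ => ∑ i ∈ Finset.range (M + 1),
      α i * (M.choose i : ℝ) * (1 - x) ^ i * x ^ (M - i)) :
    ∀ x ∈ Set.Ioo (0 : ℝ) 1,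
      g x * deriv (deriv g) x ≤ ((M : ℝ) - 1) / M * (deriv g x) ^ 2 :=
  strengthened_log_concavity_discrete_general M hM α hα_logconcave g hg
end

section
/- Let M > 1 be real and let α be a nonnegative, continuous log-concave function on (0, M), extended by zero outside (0, M). Then for every real n with -2 < n < 2M - 2, ∫ α(s)·α(n-s)·C(M-1, s)·C(M-1, n-s) ds ≥ ∫ α(s)·α(n-s)·C(M, s)·C(M-2, n-s) ds, where both integrals range over all s with 0 ≤ s ≤ M and 0 ≤ n - s ≤ M. -/
open Real MeasureTheory Set

/-!
Both products of binomial coefficients equal the kernel `K(s) = 1/(s! (M-s)! (n-s)! (M-n+s)!)`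
times a quadratic polynomial, and the difference of the two integrands is a positive multiple of
`α(s) α(n-s) K(s) w(s)` with `w(s) = (M-n+s)(Mn - (2M-1)s)`. As `K` and `α(s) α(n-s)` are invariant
under `s ↦ n - s`, `w` may be replaced by its symmetrization, a concave parabola in `s - n/2`.
Log-concavity makes `α(s) α(n-s)` decrease in `|s - n/2|`, so comparing it with its value at the
root of the parabola bounds the integral below by a nonnegative multiple of `∫ K w`. Finally
`K w` telescopes, and `∫ K w ≥ 0` comes down to comparing the two boundary terms.
-/

namespace Real

theorem inv_Gamma_eq_mul_inv_Gamma_add_one_s14 (x : ℝ) : (Gamma x)⁻¹ = x * (Gamma (x + 1))⁻¹ := by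
  rcases ne_or_eq x 0 with hx | rfl
  · rw [Gamma_add_one hx, mul_inv, mul_inv_cancel_left₀ hx]
  · rw [zero_add, Gamma_zero, inv_zero, zero_mul]

theorem continuous_inv_Gamma_s14 : Continuous fun x : ℝ => (Gamma x)⁻¹ := by
  refine (Complex.continuous_re.comp (Complex.differentiable_one_div_Gamma.continuous.comp
    Complex.continuous_ofReal)).congr fun x => ?_
  simp [Complex.Gamma_ofReal, ← Complex.ofReal_inv]

end Real

@[fun_prop]
theorem Continuous.inv_Gamma {f : ℝ → ℝ} (hf : Continuous f) :
    Continuous fun x => (Gamma (f x))⁻¹ :=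
  Real.continuous_inv_Gamma_s14.comp hf

/-- `1 / (s! (M-s)! (n-s)! (M-n+s)!)`. It is written with `Γ⁻¹`, which is continuous and satisfies
`Γ(x)⁻¹ = x Γ(x+1)⁻¹` for every `x`, so the identities below need no side conditions on `s`. -/
noncomputable def binomKernel (M n s : ℝ) : ℝ :=
  (Gamma (s + 1))⁻¹ * (Gamma (M - s + 1))⁻¹ * (Gamma (n - s + 1))⁻¹ * (Gamma (M - n + s + 1))⁻¹

noncomputable def binomWeight (M n s : ℝ) : ℝ := (M - n + s) * (M * n - (2 * M - 1) * s)

/-- A discrete antiderivative of `binomKernel * binomWeight` for the step `s ↦ s - 1`. -/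
noncomputable def kernelPotential (M n s : ℝ) : ℝ :=
  (s + 1) * (M - n + s + 1) * (M - s) * (n - s) * (M - n + s) *
    ((Gamma (s + 2))⁻¹ * (Gamma (M - s + 1))⁻¹ * (Gamma (n - s + 1))⁻¹ *
      (Gamma (M - n + s + 2))⁻¹)

section Kernel

variable (M n s : ℝ)

theorem continuous_binomKernel : Continuous (binomKernel M n) := by
  unfold binomKernel
  fun_prop

theorem continuous_kernelPotential : Continuous (kernelPotential M n) := by
  unfold kernelPotential
  fun_prop

theorem binomKernel_reflect : binomKernel M n (n - s) = binomKernel M n s := by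
  unfold binomKernel
  rw [show n - (n - s) + 1 = s + 1 by ring, show M - (n - s) + 1 = M - n + s + 1 by ring,
    show M - n + (n - s) + 1 = M - s + 1 by ring]
  ring

theorem binomKernel_nonneg {M n s : ℝ} (h₀ : 0 ≤ s) (hM : s ≤ M) (hn : s ≤ n) (hMn : n - M ≤ s) :
    0 ≤ binomKernel M n s := by
  unfold binomKernel
  have := Real.Gamma_nonneg_of_nonneg (s := s + 1) (by linarith)
  have := Real.Gamma_nonneg_of_nonneg (s := M - s + 1) (by linarith)
  have := Real.Gamma_nonneg_of_nonneg (s := n - s + 1) (by linarith)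
  have := Real.Gamma_nonneg_of_nonneg (s := M - n + s + 1) (by linarith)
  positivity

theorem genBinom_mul_genBinom_sub_two :
    genBinom M s * genBinom (M - 2) (n - s) =
      Gamma (M + 1) * Gamma (M - 1) * ((M - n + s - 1) * (M - n + s)) * binomKernel M n s := by
  have h := Real.inv_Gamma_eq_mul_inv_Gamma_add_one_s14 (M - n + s - 1)
  rw [Real.inv_Gamma_eq_mul_inv_Gamma_add_one_s14 (M - n + s - 1 + 1)] at h
  unfold genBinom binomKernel
  rw [show M - 2 + 1 = M - 1 by ring, show M - 2 - (n - s) + 1 = M - n + s - 1 by ring,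
    show M - n + s - 1 + 1 + 1 = M - n + s + 1 by ring, show M - n + s - 1 + 1 = M - n + s by ring]
    at *
  simp only [div_eq_mul_inv, mul_inv, h]
  ring

theorem genBinom_sub_one_mul_genBinom_sub_one :
    genBinom (M - 1) s * genBinom (M - 1) (n - s) =
      Gamma M ^ 2 * ((M - s) * (M - n + s)) * binomKernel M n s := by
  unfold genBinom binomKernel
  rw [show M - 1 + 1 = M by ring, show M - 1 - s + 1 = M - s by ring,
    show M - 1 - (n - s) + 1 = M - n + s by ring]
  simp only [div_eq_mul_inv, mul_inv, Real.inv_Gamma_eq_mul_inv_Gamma_add_one_s14 (M - s),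
    Real.inv_Gamma_eq_mul_inv_Gamma_add_one_s14 (M - n + s)]
  ring

theorem genBinom_sub_one_mul_sub_genBinom_mul {M : ℝ} (hM₀ : M ≠ 0) (hM₁ : M ≠ 1) (n s : ℝ) :
    genBinom (M - 1) s * genBinom (M - 1) (n - s) - genBinom M s * genBinom (M - 2) (n - s) =
      (M - 1) * Gamma (M - 1) ^ 2 * (binomKernel M n s * binomWeight M n s) := by
  have hΓ : Gamma M = (M - 1) * Gamma (M - 1) := by
    simpa using Real.Gamma_add_one (sub_ne_zero.2 hM₁)
  have hΓ' : Gamma (M + 1) = M * ((M - 1) * Gamma (M - 1)) := by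
    rw [Real.Gamma_add_one hM₀, hΓ]
  rw [genBinom_mul_genBinom_sub_two, genBinom_sub_one_mul_genBinom_sub_one, hΓ, hΓ', binomWeight]
  ring

theorem binomKernel_mul_binomWeight_eq_sub :
    binomKernel M n s * binomWeight M n s =
      kernelPotential M n s - kernelPotential M n (s - 1) := by
  unfold binomKernel binomWeight kernelPotential
  rw [show s - 1 + 2 = s + 1 by ring, show M - n + (s - 1) + 2 = M - n + s + 1 by ring,
    show M - (s - 1) + 1 = M - s + 1 + 1 by ring, show n - (s - 1) + 1 = n - s + 1 + 1 by ring,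
    Real.inv_Gamma_eq_mul_inv_Gamma_add_one_s14 (s + 1),
    Real.inv_Gamma_eq_mul_inv_Gamma_add_one_s14 (M - n + s + 1),
    Real.inv_Gamma_eq_mul_inv_Gamma_add_one_s14 (M - s + 1),
    Real.inv_Gamma_eq_mul_inv_Gamma_add_one_s14 (n - s + 1)]
  rw [show s + 1 + 1 = s + 2 by ring, show M - n + s + 1 + 1 = M - n + s + 2 by ring]
  ring

theorem kernelPotential_sub_reflect_nonneg {M n s : ℝ} (h₀ : 0 ≤ s) (hM : s ≤ M) (hn : s ≤ n)
    (hMn : n - M ≤ s) (hs : n - 1 ≤ 2 * s) :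
    0 ≤ kernelPotential M n s - kernelPotential M n (n - 1 - s) := by
  have hΓ : ∀ x, 0 ≤ x → 0 ≤ (Gamma x)⁻¹ := fun x hx =>
    inv_nonneg.2 (Real.Gamma_nonneg_of_nonneg hx)
  unfold kernelPotential
  rw [show n - 1 - s + 2 = n - s + 1 by ring, show M - (n - 1 - s) + 1 = M - n + s + 2 by ring,
    show n - (n - 1 - s) + 1 = s + 2 by ring, show M - n + (n - 1 - s) + 2 = M - s + 1 by ring]
  have hfactor : 0 ≤ (s + 1) * (M - n + s + 1) * (M - s) * (n - s) * (2 * s - n + 1) *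
      ((Gamma (s + 2))⁻¹ * (Gamma (M - s + 1))⁻¹ * (Gamma (n - s + 1))⁻¹ *
        (Gamma (M - n + s + 2))⁻¹) := by
    have := hΓ (s + 2) (by linarith)
    have := hΓ (M - s + 1) (by linarith)
    have := hΓ (n - s + 1) (by linarith)
    have := hΓ (M - n + s + 2) (by linarith)
    have : 0 ≤ s + 1 := by linarith
    have : 0 ≤ M - n + s + 1 := by linarith
    have : 0 ≤ M - s := by linarith
    have : 0 ≤ n - s := by linarith
    have : 0 ≤ 2 * s - n + 1 := by linarith
    positivity
  linarith [hfactor]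

end Kernel

section Integrals

open intervalIntegral

theorem intervalIntegral.integral_sub_comp_sub_right {E : Type*} [NormedAddCommGroup E]
    [NormedSpace ℝ E] {f : ℝ → E} (hf : Continuous f) (a b d : ℝ) :
    ∫ x in a..b, (f x - f (x - d)) = (∫ x in b - d..b, f x) - ∫ x in a - d..a, f x := by
  rw [integral_sub (hf.intervalIntegrable _ _) (Continuous.intervalIntegrable (by fun_prop) _ _),
    integral_comp_sub_right, integral_interval_sub_interval_comm' (hf.intervalIntegrable _ _)
      (hf.intervalIntegrable _ _) (hf.intervalIntegrable _ _)]

theorem intervalIntegral.integral_nonneg_of_antisymm {f : ℝ → ℝ} {a b c : ℝ}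
    (hf : ∀ x, f (a + c - x) = -f x) (hfi : IntervalIntegrable f volume a b) (hab : a ≤ b)
    (hcb : c ≤ b) (hpos : ∀ x ∈ Icc (max a c) b, 0 ≤ f x) : 0 ≤ ∫ x in a..b, f x := by
  rcases le_total c a with hca | hac
  · rw [max_eq_left hca] at hpos
    exact integral_nonneg hab hpos
  rw [max_eq_right hac] at hpos
  have hzero : ∫ x in a..c, f x = 0 := by
    have h := integral_comp_sub_left f (a + c) (a := a) (b := c)
    simp only [hf, integral_neg, add_sub_cancel_right, add_sub_cancel_left] at h
    linarith
  rw [← integral_add_adjacent_intervals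
    (hfi.mono_set (by rw [uIcc_of_le hac, uIcc_of_le hab]; exact Icc_subset_Icc le_rfl hcb))
    (hfi.mono_set (by rw [uIcc_of_le hcb, uIcc_of_le hab]; exact Icc_subset_Icc hac le_rfl)),
    hzero, zero_add]
  exact integral_nonneg hcb hpos

theorem intervalIntegral.integral_mul_eq_integral_mul_average_reflect {g w : ℝ → ℝ} {a b c : ℝ}
    (habc : a + b = c) (hg : ∀ x, g (c - x) = g x)
    (hgw : IntervalIntegrable (fun x => g x * w x) volume a b) :
    ∫ x in a..b, g x * w x = ∫ x in a..b, g x * ((w x + w (c - x)) / 2) := by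
  subst habc
  have hreflect : ∫ x in a..b, g x * w (a + b - x) = ∫ x in a..b, g x * w x := by
    have h := integral_comp_sub_left (fun x => g x * w x) (a + b) (a := a) (b := b)
    simpa only [hg, add_sub_cancel_right, add_sub_cancel_left] using h
  have hgw' : IntervalIntegrable (fun x => g x * w (a + b - x)) volume a b := by
    have h := (hgw.comp_sub_left (a + b)).symm
    simp only [hg, add_sub_cancel_right, add_sub_cancel_left] at h
    exact h
  calc ∫ x in a..b, g x * w x
      = ((∫ x in a..b, g x * w x) + ∫ x in a..b, g x * w (a + b - x)) / 2 := by
        rw [hreflect]; ring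
    _ = ∫ x in a..b, g x * ((w x + w (a + b - x)) / 2) := by
        rw [← integral_add hgw hgw', ← integral_div]
        congr 1; ext x; ring

end Integrals

theorem sub_mul_nonneg_of_antitoneOn {φ : ℝ → ℝ} (hφ : AntitoneOn φ (Ici 0)) {A B t : ℝ}
    (hA : 0 ≤ A) (hB : 0 < B) (ht : 0 ≤ t) :
    0 ≤ (φ t - φ √(A / B)) * (A - B * t ^ 2) := by
  have hθ : √(A / B) ^ 2 = A / B := Real.sq_sqrt (div_nonneg hA hB.le)
  rcases le_total t √(A / B) with h | h
  · have hsq : t ^ 2 ≤ A / B := hθ ▸ pow_le_pow_left₀ ht h 2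
    refine mul_nonneg (sub_nonneg.2 (hφ ht (Real.sqrt_nonneg _) h)) ?_
    rw [le_div_iff₀ hB] at hsq
    linarith
  · have hsq : A / B ≤ t ^ 2 := hθ ▸ pow_le_pow_left₀ (Real.sqrt_nonneg _) h 2
    refine mul_nonneg_of_nonpos_of_nonpos (sub_nonpos.2 (hφ (Real.sqrt_nonneg _) ht h)) ?_
    rw [div_le_iff₀ hB] at hsq
    linarith

theorem mul_comp_sub_eq_abs (f : ℝ → ℝ) (n s : ℝ) :
    f s * f (n - s) = f (n / 2 + |s - n / 2|) * f (n / 2 - |s - n / 2|) := by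
  rcases abs_cases (s - n / 2) with ⟨h, -⟩ | ⟨h, -⟩ <;> rw [h]
  · ring_nf
  · rw [mul_comm]; ring_nf

namespace IsLogConcaveOn

variable {S : Set ℝ} {f : ℝ → ℝ}

theorem mul_le_mul_swap (hf : IsLogConcaveOn S f) (hf₀ : ∀ x, 0 ≤ f x) {x y l : ℝ} (hx : x ∈ S)
    (hy : y ∈ S) (hl₀ : 0 < l) (hl₁ : l < 1) :
    f x * f y ≤ f (l * x + (1 - l) * y) * f ((1 - l) * x + l * y) := by
  have h₁ := hf x hx y hy l hl₀ hl₁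
  have h₂ := hf x hx y hy (1 - l) (by linarith) (by linarith)
  rw [sub_sub_cancel] at h₂
  have hsplit : ∀ z : ℝ, 0 ≤ z → z = z ^ l * z ^ (1 - l) := fun z hz => by
    rw [← Real.rpow_add' hz (by norm_num), add_sub_cancel, Real.rpow_one]
  calc f x * f y = (f x ^ l * f y ^ (1 - l)) * (f x ^ (1 - l) * f y ^ l) := by
        nth_rw 1 [hsplit (f x) (hf₀ x), hsplit (f y) (hf₀ y)]; ring
    _ ≤ _ := mul_le_mul h₁ h₂
      (mul_nonneg (Real.rpow_nonneg (hf₀ x) _) (Real.rpow_nonneg (hf₀ y) _)) (hf₀ _)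

theorem antitoneOn_mul_reflect (hf : IsLogConcaveOn S f) (hf₀ : ∀ x, 0 ≤ f x)
    (hfS : ∀ x ∉ S, f x = 0) (c : ℝ) : AntitoneOn (fun t => f (c + t) * f (c - t)) (Ici 0) := by
  intro u hu v _ huv
  rcases huv.eq_or_lt with rfl | huv
  · rfl
  have hv : 0 < v := lt_of_le_of_lt hu huv
  have hu : 0 ≤ u := hu
  by_cases hcv : c + v ∈ S
  · by_cases hcv' : c - v ∈ S
    · have h := hf.mul_le_mul_swap hf₀ hcv hcv' (l := (v + u) / (2 * v))
        (by positivity) ((div_lt_one (by positivity)).2 (by linarith))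
      rwa [show (v + u) / (2 * v) * (c + v) + (1 - (v + u) / (2 * v)) * (c - v) = c + u by
          field_simp; ring,
        show (1 - (v + u) / (2 * v)) * (c + v) + (v + u) / (2 * v) * (c - v) = c - u by
          field_simp; ring] at h
    · simp only [hfS _ hcv', mul_zero]
      exact mul_nonneg (hf₀ _) (hf₀ _)
  · simp only [hfS _ hcv, zero_mul]
    exact mul_nonneg (hf₀ _) (hf₀ _)

/-- Log-concavity bounds `f x` by `f z ^ 2 / f c`, where `z` maximizes `f` on a compact interval
containing all midpoints of `c` with points of `(a, b)`. -/
theorem exists_le_of_continuousOn {a b : ℝ} (hf : IsLogConcaveOn (Ioo a b) f)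
    (hf₀ : ∀ x, 0 ≤ f x) (hcont : ContinuousOn f (Ioo a b)) : ∃ C, ∀ x ∈ Ioo a b, f x ≤ C := by
  by_cases hzero : ∀ x ∈ Ioo a b, f x = 0
  · exact ⟨0, fun x hx => (hzero x hx).le⟩
  push Not at hzero
  obtain ⟨c, hc, hfc⟩ := hzero
  have hfc : 0 < f c := (hf₀ c).lt_of_ne' hfc
  have hJ : Icc ((a + c) / 2) ((c + b) / 2) ⊆ Ioo a b := fun x hx =>
    ⟨by linarith [hx.1, hc.1], by linarith [hx.2, hc.2]⟩
  obtain ⟨z, -, hz⟩ := isCompact_Icc.exists_isMaxOn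
    ⟨c, by constructor <;> linarith [hc.1, hc.2]⟩ (hcont.mono hJ)
  refine ⟨f z * f z / f c, fun x hx => (le_div_iff₀' hfc).2 ?_⟩
  have hmid : (1 / 2) * c + (1 - 1 / 2) * x ∈ Icc ((a + c) / 2) ((c + b) / 2) :=
    ⟨by linarith [hx.1], by linarith [hx.2]⟩
  have h := hf.mul_le_mul_swap hf₀ hc hx (l := 1 / 2) (by norm_num) (by norm_num)
  rw [show (1 - 1 / 2 : ℝ) * c + 1 / 2 * x = 1 / 2 * c + (1 - 1 / 2) * x by ring] at h
  exact h.trans (mul_le_mul (hz hmid) (hz hmid) (hf₀ _) (hf₀ _))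

theorem intervalIntegrable_mul_comp_sub {M : ℝ} (hf : IsLogConcaveOn (Ioo 0 M) f)
    (hf₀ : ∀ x, 0 ≤ f x) (hcont : ContinuousOn f (Ioo 0 M)) (hfS : ∀ x ∉ Ioo 0 M, f x = 0)
    (n a b : ℝ) : IntervalIntegrable (fun s => f s * f (n - s)) volume a b := by
  classical
  obtain ⟨C, hC⟩ := hf.exists_le_of_continuousOn hf₀ hcont
  have hbound : ∀ x, ‖f x‖ ≤ max C 0 := fun x => by
    rw [Real.norm_of_nonneg (hf₀ x)]
    by_cases hx : x ∈ Ioo 0 M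
    · exact (hC x hx).trans (le_max_left _ _)
    · exact (hfS x hx).le.trans (le_max_right _ _)
  have hmeas : Measurable f := by
    have h := hcont.measurable_piecewise continuous_const.continuousOn measurableSet_Ioo
      (g := fun _ => (0 : ℝ))
    convert h using 1
    ext x
    by_cases hx : x ∈ Ioo 0 M <;> simp [hx, hfS]
  refine intervalIntegrable_iff.2 (Measure.integrableOn_of_bounded (M := max C 0 * max C 0)
    measure_Ioc_lt_top.ne ?_ (Filter.Eventually.of_forall fun x => ?_))
  · exact (hmeas.mul (hmeas.comp (measurable_const.sub measurable_id))).aestronglyMeasurable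
  · rw [norm_mul]
    exact mul_le_mul (hbound x) (hbound _) (norm_nonneg _) ((norm_nonneg _).trans (hbound x))

end IsLogConcaveOn

section BinomIntegral

open intervalIntegral

variable {M n L H : ℝ}

/-- After telescoping, the two boundary pieces are exchanged by `s ↦ n - 1 - s`, and
`kernelPotential` decreases under this reflection on the right of `(n - 1) / 2`. -/
theorem integral_binomKernel_mul_binomWeight_nonneg (hL₀ : 0 ≤ L) (hLM : n - M ≤ L)
    (hLH : L ≤ H) (hsum : L + H = n) :
    0 ≤ ∫ s in L..H, binomKernel M n s * binomWeight M n s := by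
  have hD := continuous_kernelPotential M n
  have hreflect : ∫ s in H - 1..H, kernelPotential M n (n - 1 - s) =
      ∫ s in L - 1..L, kernelPotential M n s := by
    rw [integral_comp_sub_left, show n - 1 - H = L - 1 by linarith,
      show n - 1 - (H - 1) = L by linarith]
  calc 0 ≤ ∫ s in H - 1..H, (kernelPotential M n s - kernelPotential M n (n - 1 - s)) := by
        refine integral_nonneg_of_antisymm (c := L) (fun x => ?_)
          (Continuous.intervalIntegrable (by fun_prop) _ _) (by linarith) hLH fun x hx => ?_
        · rw [show H - 1 + L - x = n - 1 - x by linarith, sub_sub_cancel]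
          ring
        · have hx₁ := (le_max_left _ _).trans hx.1
          have hx₂ := (le_max_right _ _).trans hx.1
          exact kernelPotential_sub_reflect_nonneg (by linarith) (by linarith [hx.2])
            (by linarith [hx.2]) (by linarith) (by linarith)
    _ = ∫ s in L..H, (kernelPotential M n s - kernelPotential M n (s - 1)) := by
        rw [integral_sub_comp_sub_right hD, integral_sub (hD.intervalIntegrable _ _)
          (Continuous.intervalIntegrable (by fun_prop) _ _), hreflect]
    _ = ∫ s in L..H, binomKernel M n s * binomWeight M n s := by
        simp only [binomKernel_mul_binomWeight_eq_sub]

theorem binomWeight_add_binomWeight_reflect (s : ℝ) :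
    (binomWeight M n s + binomWeight M n (n - s)) / 2 =
      n * (2 * M - n) / 4 - (2 * M - 1) * |s - n / 2| ^ 2 := by
  rw [sq_abs, binomWeight, binomWeight]
  ring

theorem integral_mul_binomKernel_mul_binomWeight_nonneg (hM : 1 / 2 < M) (hL₀ : 0 ≤ L)
    (hLM : n - M ≤ L) (hLH : L ≤ H) (hsum : L + H = n) {φ : ℝ → ℝ} (hφ : AntitoneOn φ (Ici 0))
    (hφ₀ : ∀ t, 0 ≤ φ t) (hφi : IntervalIntegrable (fun s => φ |s - n / 2|) volume L H) :
    0 ≤ ∫ s in L..H, φ |s - n / 2| * (binomKernel M n s * binomWeight M n s) := by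
  have hA : 0 ≤ n * (2 * M - n) / 4 := by
    have : 0 ≤ n := by linarith
    have : 0 ≤ 2 * M - n := by linarith
    positivity
  have hB : 0 < 2 * M - 1 := by linarith
  have hK := continuous_binomKernel M n
  have hsymm (g : ℝ → ℝ) (hg : ∀ s, g (n - s) = g s)
      (hgi : IntervalIntegrable (fun s => g s * binomWeight M n s) volume L H) :
      ∫ s in L..H, g s * binomWeight M n s =
        ∫ s in L..H, g s * (n * (2 * M - n) / 4 - (2 * M - 1) * |s - n / 2| ^ 2) := by
    simp only [integral_mul_eq_integral_mul_average_reflect hsum hg hgi,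
      binomWeight_add_binomWeight_reflect]
  have habs (s : ℝ) : |n - s - n / 2| = |s - n / 2| := by
    rw [← abs_neg]; ring_nf
  have hw : Continuous (binomWeight M n) := by unfold binomWeight; fun_prop
  set θ := √(n * (2 * M - n) / 4 / (2 * M - 1))
  calc 0 ≤ φ θ * ∫ s in L..H, binomKernel M n s * binomWeight M n s :=
        mul_nonneg (hφ₀ θ) (integral_binomKernel_mul_binomWeight_nonneg hL₀ hLM hLH hsum)
    _ = ∫ s in L..H, φ θ * (binomKernel M n s *
          (n * (2 * M - n) / 4 - (2 * M - 1) * |s - n / 2| ^ 2)) := by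
        rw [hsymm _ (binomKernel_reflect M n) (Continuous.intervalIntegrable (by fun_prop) _ _),
          intervalIntegral.integral_const_mul]
    _ ≤ ∫ s in L..H, φ |s - n / 2| * (binomKernel M n s *
          (n * (2 * M - n) / 4 - (2 * M - 1) * |s - n / 2| ^ 2)) := by
        refine integral_mono_on hLH (Continuous.intervalIntegrable (by fun_prop) _ _)
          (hφi.mul_continuousOn (Continuous.continuousOn (by fun_prop))) fun s hs => ?_
        have hcheb := sub_mul_nonneg_of_antitoneOn hφ hA hB (abs_nonneg (s - n / 2))
        have hKs : 0 ≤ binomKernel M n s :=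
          binomKernel_nonneg (by linarith [hs.1]) (by linarith [hs.2]) (by linarith [hs.2])
            (by linarith [hs.1])
        nlinarith [mul_nonneg hcheb hKs]
    _ = ∫ s in L..H, φ |s - n / 2| * (binomKernel M n s * binomWeight M n s) := by
        simp only [← mul_assoc]
        refine (hsymm _ (fun s => by rw [habs, binomKernel_reflect]) ?_).symm
        simp only [mul_assoc]
        exact hφi.mul_continuousOn (Continuous.continuousOn (by fun_prop))

end BinomIntegral

theorem setOf_mem_Icc_and_sub_mem_Icc_eq (M n : ℝ) :
    {s : ℝ | 0 ≤ s ∧ s ≤ M ∧ 0 ≤ n - s ∧ n - s ≤ M} = Icc (max 0 (n - M)) (min n M) := by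
  ext s
  simp only [mem_ofPred_eq, mem_Icc, max_le_iff, le_min_iff]
  constructor
  · rintro ⟨h₁, h₂, h₃, h₄⟩; exact ⟨⟨h₁, by linarith⟩, by linarith, h₂⟩
  · rintro ⟨⟨h₁, h₂⟩, h₃, h₄⟩; exact ⟨h₁, h₄, by linarith, by linarith⟩

theorem max_zero_sub_add_min (n M : ℝ) : max 0 (n - M) + min n M = n := by
  rcases le_total n M with h | h
  · rw [max_eq_left (by linarith), min_eq_left h, zero_add]
  · rw [max_eq_right (by linarith), min_eq_right h, sub_add_cancel]

theorem integral_mixture_le_of_isLogConcaveOn {M n L H : ℝ} (hM : 1 < M) {α : ℝ → ℝ}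
    (hα₀ : ∀ s, 0 ≤ α s) (hαc : ContinuousOn α (Ioo 0 M)) (hα : IsLogConcaveOn (Ioo 0 M) α)
    (hαS : ∀ s ∉ Ioo 0 M, α s = 0) (hL₀ : 0 ≤ L) (hLM : n - M ≤ L) (hLH : L ≤ H)
    (hsum : L + H = n) :
    ∫ s in L..H, α s * α (n - s) * genBinom M s * genBinom (M - 2) (n - s) ≤
      ∫ s in L..H, α s * α (n - s) * genBinom (M - 1) s * genBinom (M - 1) (n - s) := by
  have hP := hα.intervalIntegrable_mul_comp_sub hα₀ hαc hαS n L H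
  have hK := continuous_binomKernel M n
  have hi₁ : IntervalIntegrable (fun s => α s * α (n - s) * genBinom M s *
      genBinom (M - 2) (n - s)) volume L H := by
    simp only [mul_assoc (α _ * α _), genBinom_mul_genBinom_sub_two]
    exact hP.mul_continuousOn (Continuous.continuousOn (by fun_prop))
  have hi₂ : IntervalIntegrable (fun s => α s * α (n - s) * genBinom (M - 1) s *
      genBinom (M - 1) (n - s)) volume L H := by
    simp only [mul_assoc (α _ * α _), genBinom_sub_one_mul_genBinom_sub_one]
    exact hP.mul_continuousOn (Continuous.continuousOn (by fun_prop))
  have hdiff (s : ℝ) :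
      α s * α (n - s) * genBinom (M - 1) s * genBinom (M - 1) (n - s) -
        α s * α (n - s) * genBinom M s * genBinom (M - 2) (n - s) =
      (M - 1) * Gamma (M - 1) ^ 2 * (α (n / 2 + |s - n / 2|) * α (n / 2 - |s - n / 2|) *
        (binomKernel M n s * binomWeight M n s)) := by
    rw [mul_assoc _ (genBinom (M - 1) s), mul_assoc _ (genBinom M s), ← mul_sub,
      genBinom_sub_one_mul_sub_genBinom_mul (by linarith) hM.ne', mul_comp_sub_eq_abs α n s]
    ring
  rw [← sub_nonneg, ← intervalIntegral.integral_sub hi₂ hi₁]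
  simp only [hdiff, intervalIntegral.integral_const_mul]
  refine mul_nonneg (mul_nonneg (by linarith) (sq_nonneg _))
    (integral_mul_binomKernel_mul_binomWeight_nonneg (by linarith) hL₀ hLM hLH hsum
      (φ := fun t => α (n / 2 + t) * α (n / 2 - t)) (hα.antitoneOn_mul_reflect hα₀ hαS _)
      (fun t => mul_nonneg (hα₀ _) (hα₀ _)) ?_)
  simpa only [mul_comp_sub_eq_abs α n] using hP

theorem mixture_integral_ineq_one_general
    (M : ℝ) (hM : 1 < M) (α : ℝ → ℝ)
    (hα_nonneg : ∀ s, 0 ≤ α s)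
    (hα_cont : ContinuousOn α (Set.Ioo (0 : ℝ) M))
    (hα_logconcave : IsLogConcaveOn (Set.Ioo (0 : ℝ) M) α)
    (hα_zero : ∀ s, s ∉ Set.Ioo (0 : ℝ) M → α s = 0)
    (n : ℝ) :
    (∫ s in {s : ℝ | 0 ≤ s ∧ s ≤ M ∧ 0 ≤ n - s ∧ n - s ≤ M},
        α s * α (n - s) * genBinom M s * genBinom (M - 2) (n - s)) ≤
      ∫ s in {s : ℝ | 0 ≤ s ∧ s ≤ M ∧ 0 ≤ n - s ∧ n - s ≤ M},
        α s * α (n - s) * genBinom (M - 1) s * genBinom (M - 1) (n - s) := by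
  rw [setOf_mem_Icc_and_sub_mem_Icc_eq]
  rcases lt_or_ge (min n M) (max 0 (n - M)) with hempty | hLH
  · simp [Icc_eq_empty_of_lt hempty]
  simp only [integral_Icc_eq_integral_Ioc, ← intervalIntegral.integral_of_le hLH]
  exact integral_mixture_le_of_isLogConcaveOn hM hα_nonneg hα_cont hα_logconcave hα_zero
    (le_max_left _ _) (le_max_right _ _) hLH (max_zero_sub_add_min n M)

theorem mixture_integral_ineq_one
    (M : ℝ) (hM : 1 < M) (α : ℝ → ℝ)
    (hα_nonneg : ∀ s, 0 ≤ α s)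
    (hα_cont : ContinuousOn α (Set.Ioo (0 : ℝ) M))
    (hα_logconcave : IsLogConcaveOn (Set.Ioo (0 : ℝ) M) α)
    (hα_zero : ∀ s, s ∉ Set.Ioo (0 : ℝ) M → α s = 0)
    (n : ℝ) (hn₁ : -2 < n) (hn₂ : n < 2 * M - 2) :
    (∫ s in {s : ℝ | 0 ≤ s ∧ s ≤ M ∧ 0 ≤ n - s ∧ n - s ≤ M},
        α s * α (n - s) * genBinom M s * genBinom (M - 2) (n - s)) ≤
      ∫ s in {s : ℝ | 0 ≤ s ∧ s ≤ M ∧ 0 ≤ n - s ∧ n - s ≤ M},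
        α s * α (n - s) * genBinom (M - 1) s * genBinom (M - 1) (n - s) :=
  mixture_integral_ineq_one_general M hM α hα_nonneg hα_cont hα_logconcave hα_zero n
end
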